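/- Let 𝒱 be the v-transform with fulcrum δ ∈ (0,1) and generator Ψ, where Ψ is differentiable on (0,1) with strictly positive derivative, and let Δ be its conditional down probability. Then for every u ∈ (δ,1), 𝒱 is differentiable at u and at the dual point u* = u − 𝒱(u) ∈ (0,δ), and 𝒱′(u) = 𝒱′(u*) / (1 + 𝒱′(u*)); equivalently, 1 − Δ(𝒱(u)) = 1/𝒱′(u). -/

import Mathlib

/-!
For `u ∈ (δ, 1)` put `y = (1 - u)/(1 - δ)` and `x = Ψ⁻¹(y)`. Then `𝒱(u) = u - δx`, so
`u* = δx`, and the left branch gives `𝒱(δx) = 1 - δx - (1 - δ)y = 𝒱(u)`. With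
`a = (1 - δ)/δ · Ψ'(x) > 0` the chain rule, together with the inverse function rule for `Ψ⁻¹`
at `y`, gives `𝒱'(u*) = -1 - a` and `𝒱'(u) = 1 + 1/a`, and both identities are algebra in `a`.
Since `𝒱` is strictly decreasing on `[0, δ]`, `u*` is the left-branch inverse `𝒱⁻¹(𝒱(u))`.
-/

open Set MeasureTheory

/-- The v-transform with fulcrum `δ` and generator `Ψ` (with inverse `Ψinv`):
`𝒱(u) = (1-u) - (1-δ)·Ψ(u/δ)` for `u ≤ δ` and `𝒱(u) = u - δ·Ψinv((1-u)/(1-δ))`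
for `u > δ`. -/
noncomputable def vt (δ : ℝ) (Ψ Ψinv : ℝ → ℝ) (u : ℝ) : ℝ :=
  if u ≤ δ then (1 - u) - (1 - δ) * Ψ (u / δ)
  else u - δ * Ψinv ((1 - u) / (1 - δ))

/-- Left-branch inverse `𝒱⁻¹(v) = inf {u ∈ [0,1] : 𝒱 u = v}`. -/
noncomputable def vtInv (V : ℝ → ℝ) (v : ℝ) : ℝ :=
  sInf {u | u ∈ Set.Icc (0:ℝ) 1 ∧ V u = v}

/-- Conditional down probability `Δ(v) = -1 / 𝒱′(𝒱⁻¹(v))`. -/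
noncomputable def vtDelta (V : ℝ → ℝ) (v : ℝ) : ℝ :=
  -1 / deriv V (vtInv V v)

/-- Stochastic inversion function of a v-transform:
`𝒱⁻¹ₛ(v,w) = 𝒱⁻¹(v)` if `w ≤ Δ(v)`, and `v + 𝒱⁻¹(v)` otherwise. -/
noncomputable def vtSInv (V : ℝ → ℝ) (v w : ℝ) : ℝ :=
  if w ≤ vtDelta V v then vtInv V v else v + vtInv V v

open Filter

theorem StrictMonoOn.strictMonoOn_of_leftInvOn {α β : Type*} [LinearOrder α] [Preorder β]
    {f : α → β} {g : β → α} {s : Set α} {t : Set β} (hf : StrictMonoOn f s)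
    (hsurj : SurjOn f s t) (hinv : LeftInvOn g f s) : StrictMonoOn g t := by
  rintro _ hfa _ hfb hab
  obtain ⟨a, ha, rfl⟩ := hsurj hfa
  obtain ⟨b, hb, rfl⟩ := hsurj hfb
  rwa [hinv ha, hinv hb, ← hf.lt_iff_lt ha hb]

section Generator

variable {Ψ Ψinv : ℝ → ℝ}

theorem surjOn_Icc_of_continuousOn (hΨc : ContinuousOn Ψ (Icc 0 1)) (hΨ0 : Ψ 0 = 0)
    (hΨ1 : Ψ 1 = 1) : SurjOn Ψ (Icc 0 1) (Icc 0 1) := fun _ hv =>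
  intermediate_value_Icc zero_le_one hΨc (by rwa [hΨ0, hΨ1])

theorem mapsTo_Ioo_of_leftInvOn (hΨ0 : Ψ 0 = 0) (hΨ1 : Ψ 1 = 1)
    (hsurj : SurjOn Ψ (Icc 0 1) (Icc 0 1)) (hinv : LeftInvOn Ψinv Ψ (Icc 0 1)) :
    MapsTo Ψinv (Ioo 0 1) (Ioo 0 1) := by
  intro y hy
  obtain ⟨x, hx, rfl⟩ := hsurj (Ioo_subset_Icc_self hy)
  rw [hinv hx]
  refine ⟨hx.1.lt_of_ne ?_, hx.2.lt_of_ne ?_⟩ <;> rintro rfl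
  exacts [hy.1.ne' hΨ0, hy.2.ne hΨ1]

theorem hasDerivAt_of_invOn_Icc (hΨ0 : Ψ 0 = 0) (hΨ1 : Ψ 1 = 1)
    (hΨm : StrictMonoOn Ψ (Icc 0 1)) (hsurj : SurjOn Ψ (Icc 0 1) (Icc 0 1))
    (hinv : InvOn Ψinv Ψ (Icc 0 1) (Icc 0 1)) {y : ℝ} (hy : y ∈ Ioo 0 1)
    (hΨd : DifferentiableAt ℝ Ψ (Ψinv y)) (hΨ' : deriv Ψ (Ψinv y) ≠ 0) :
    HasDerivAt Ψinv (deriv Ψ (Ψinv y))⁻¹ y := by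
  have hx := mapsTo_Ioo_of_leftInvOn hΨ0 hΨ1 hsurj hinv.1 hy
  have hcont : ContinuousAt Ψinv y := by
    refine (hΨm.strictMonoOn_of_leftInvOn hsurj hinv.1).continuousAt_of_image_mem_nhds
      (Icc_mem_nhds hy.1 hy.2) ?_
    refine mem_of_superset (Icc_mem_nhds hx.1 hx.2) fun t ht => ⟨Ψ t, ⟨?_, ?_⟩, hinv.1 ht⟩
    · simpa only [hΨ0] using hΨm.monotoneOn ⟨le_rfl, zero_le_one⟩ ht ht.1
    · simpa only [hΨ1] using hΨm.monotoneOn ht ⟨zero_le_one, le_rfl⟩ ht.2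
  exact .of_local_left_inverse hcont hΨd.hasDerivAt hΨ'
    (eventually_of_mem (Ioo_mem_nhds hy.1 hy.2) fun z hz => hinv.2 (Ioo_subset_Icc_self hz))

end Generator

theorem vtInv_apply_eq_of_forall_lt {V : ℝ → ℝ} {t : ℝ} (ht : t ∈ Icc 0 1)
    (hmin : ∀ s ∈ Icc 0 1, s < t → V s ≠ V t) : vtInv V (V t) = t := by
  refine IsLeast.csInf_eq ⟨⟨ht, rfl⟩, fun s ⟨hs, hst⟩ => ?_⟩
  by_contra! hlt
  exact hmin s hs hlt hst

section VTransform

variable {δ u : ℝ} {Ψ Ψinv : ℝ → ℝ}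

theorem vt_of_le (h : u ≤ δ) : vt δ Ψ Ψinv u = (1 - u) - (1 - δ) * Ψ (u / δ) := if_pos h

theorem vt_of_lt (h : δ < u) : vt δ Ψ Ψinv u = u - δ * Ψinv ((1 - u) / (1 - δ)) :=
  if_neg h.not_ge

theorem hasDerivAt_vt_of_lt {d : ℝ} (h : u < δ) (hΨ : HasDerivAt Ψ d (u / δ)) :
    HasDerivAt (vt δ Ψ Ψinv) (-1 - (1 - δ) / δ * d) u := by
  refine .congr_of_eventuallyEq ?_ (eventually_of_mem (Iio_mem_nhds h) fun t ht => vt_of_le ht.le)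
  refine (((hasDerivAt_id u).const_sub 1).sub
    ((hΨ.comp u ((hasDerivAt_id u).div_const δ)).const_mul (1 - δ))).congr_deriv ?_
  ring

theorem hasDerivAt_vt_of_gt {d : ℝ} (h : δ < u)
    (hΨinv : HasDerivAt Ψinv d ((1 - u) / (1 - δ))) :
    HasDerivAt (vt δ Ψ Ψinv) (1 + δ / (1 - δ) * d) u := by
  refine .congr_of_eventuallyEq ?_ (eventually_of_mem (Ioi_mem_nhds h) fun t ht => vt_of_lt ht)
  have hy : HasDerivAt (fun t => (1 - t) / (1 - δ)) (-1 / (1 - δ)) u :=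
    ((hasDerivAt_id u).const_sub 1).div_const (1 - δ)
  refine ((hasDerivAt_id u).sub ((hΨinv.comp u hy).const_mul δ)).congr_deriv ?_
  ring

theorem strictAntiOn_vt (hδ : δ ∈ Ioo 0 1) (hΨm : MonotoneOn Ψ (Icc 0 1)) :
    StrictAntiOn (vt δ Ψ Ψinv) (Icc 0 δ) := by
  have hscale : MapsTo (· / δ) (Icc 0 δ) (Icc 0 1) := fun t ht =>
    ⟨div_nonneg ht.1 hδ.1.le, (div_le_one hδ.1).2 ht.2⟩
  intro s hs t ht hst
  rw [vt_of_le hs.2, vt_of_le ht.2]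
  have := hΨm (hscale hs) (hscale ht) (div_le_div_of_nonneg_right hst.le hδ.1.le)
  nlinarith [hδ.2]

theorem vt_dual_point_eq (hδ : δ ∈ Ioo 0 1) (h : δ < u) (hx : Ψinv ((1 - u) / (1 - δ)) ≤ 1)
    (hΨinv : Ψ (Ψinv ((1 - u) / (1 - δ))) = (1 - u) / (1 - δ)) :
    vt δ Ψ Ψinv (δ * Ψinv ((1 - u) / (1 - δ))) = vt δ Ψ Ψinv u := by
  rw [vt_of_le (mul_le_of_le_one_right hδ.1.le hx), mul_div_cancel_left₀ _ hδ.1.ne', hΨinv,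
    vt_of_lt h, mul_div_cancel₀ _ (sub_ne_zero.2 hδ.2.ne')]
  ring

theorem vtInv_vt_of_gt (hδ : δ ∈ Ioo 0 1) (hΨm : MonotoneOn Ψ (Icc 0 1)) (h : δ < u)
    (hx : Ψinv ((1 - u) / (1 - δ)) ∈ Icc 0 1)
    (hΨinv : Ψ (Ψinv ((1 - u) / (1 - δ))) = (1 - u) / (1 - δ)) :
    vtInv (vt δ Ψ Ψinv) (vt δ Ψ Ψinv u) = δ * Ψinv ((1 - u) / (1 - δ)) := by
  have hδx : δ * Ψinv ((1 - u) / (1 - δ)) ∈ Icc 0 δ :=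
    ⟨mul_nonneg hδ.1.le hx.1, mul_le_of_le_one_right hδ.1.le hx.2⟩
  rw [← vt_dual_point_eq hδ h hx.2 hΨinv]
  refine vtInv_apply_eq_of_forall_lt ⟨hδx.1, hδx.2.trans hδ.2.le⟩ fun s hs hsx => ?_
  exact (strictAntiOn_vt hδ hΨm ⟨hs.1, (hsx.trans_le hδx.2).le⟩ hδx hsx).ne'

end VTransform

theorem dual_slopes {a : ℝ} (ha : 0 < a) :
    1 + a⁻¹ = (-1 - a) / (1 + (-1 - a)) ∧ 1 - -1 / (-1 - a) = 1 / (1 + a⁻¹) := by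
  have : 1 + a ≠ 0 := by positivity
  constructor
  · rw [show 1 + (-1 - a) = -a by ring]
    field_simp
    ring
  · rw [show -1 - a = -(1 + a) by ring]
    field_simp
    ring

theorem stmt_18
    (δ : ℝ) (hδ : δ ∈ Set.Ioo (0:ℝ) 1) (Ψ Ψinv : ℝ → ℝ)
    (hΨc : ContinuousOn Ψ (Set.Icc 0 1)) (hΨm : StrictMonoOn Ψ (Set.Icc 0 1))
    (hΨ0 : Ψ 0 = 0) (hΨ1 : Ψ 1 = 1)
    (hΨinv : ∀ x ∈ Set.Icc (0:ℝ) 1, Ψinv (Ψ x) = x ∧ Ψ (Ψinv x) = x)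
    (hΨd : ∀ x ∈ Set.Ioo (0:ℝ) 1, DifferentiableAt ℝ Ψ x ∧ 0 < deriv Ψ x)
    :
    ∀ u ∈ Set.Ioo δ 1,
      u - vt δ Ψ Ψinv u ∈ Set.Ioo 0 δ ∧
      DifferentiableAt ℝ (vt δ Ψ Ψinv) u ∧
      DifferentiableAt ℝ (vt δ Ψ Ψinv) (u - vt δ Ψ Ψinv u) ∧
      deriv (vt δ Ψ Ψinv) u
        = deriv (vt δ Ψ Ψinv) (u - vt δ Ψ Ψinv u)
            / (1 + deriv (vt δ Ψ Ψinv) (u - vt δ Ψ Ψinv u)) ∧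
      1 - vtDelta (vt δ Ψ Ψinv) (vt δ Ψ Ψinv u) = 1 / deriv (vt δ Ψ Ψinv) u := by
  rintro u ⟨hδu, hu1⟩
  have hinv : InvOn Ψinv Ψ (Icc 0 1) (Icc 0 1) :=
    ⟨fun x hx => (hΨinv x hx).1, fun x hx => (hΨinv x hx).2⟩
  have hsurj := surjOn_Icc_of_continuousOn hΨc hΨ0 hΨ1
  have h1δ : 0 < 1 - δ := sub_pos.2 hδ.2
  set y := (1 - u) / (1 - δ)
  have hy : y ∈ Ioo 0 1 := ⟨div_pos (by linarith) h1δ, (div_lt_one h1δ).2 (by linarith)⟩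
  set x := Ψinv y
  have hx : x ∈ Ioo 0 1 := mapsTo_Ioo_of_leftInvOn hΨ0 hΨ1 hsurj hinv.1 hy
  obtain ⟨hΨx, hΨ'x⟩ := hΨd x hx
  set a := (1 - δ) / δ * deriv Ψ x
  have ha : 0 < a := mul_pos (div_pos h1δ hδ.1) hΨ'x
  have hdual : u - vt δ Ψ Ψinv u = δ * x := by rw [vt_of_lt hδu]; ring
  have hδx : δ * x ∈ Ioo 0 δ := ⟨mul_pos hδ.1 hx.1, mul_lt_of_lt_one_right hδ.1 hx.2⟩
  have hL : HasDerivAt (vt δ Ψ Ψinv) (-1 - a) (δ * x) :=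
    hasDerivAt_vt_of_lt hδx.2 (by rw [mul_div_cancel_left₀ _ hδ.1.ne']; exact hΨx.hasDerivAt)
  have hR : HasDerivAt (vt δ Ψ Ψinv) (1 + a⁻¹) u := by
    convert hasDerivAt_vt_of_gt hδu
      (hasDerivAt_of_invOn_Icc hΨ0 hΨ1 hΨm hsurj hinv hy hΨx hΨ'x.ne') using 2
    rw [mul_inv, inv_div]
  rw [hdual]
  refine ⟨hδx, hR.differentiableAt, hL.differentiableAt, ?_, ?_⟩
  · rw [hR.deriv, hL.deriv]
    exact (dual_slopes ha).1
  · rw [vtDelta, vtInv_vt_of_gt hδ hΨm.monotoneOn hδu (Ioo_subset_Icc_self hx)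
      (hinv.2 (Ioo_subset_Icc_self hy)), hR.deriv, hL.deriv]
    exact (dual_slopes ha).2
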